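/- arXiv:1809.09479 — 2 statements merged into one kernel-verified Lean document; each statement's English description precedes it below -/
import Mathlib

section
/- Let A ≤ B ≤ C be groups and λ an ordinal such that C_C^α(A) = Z_α(C) for all α ≤ λ. Then for all α ≤ λ, C_B^α(A) = Z_α(B) = Z_α(C) ∩ B. -/
open Ordinal

section Defs
variable {G : Type*} [Group G]

attribute [local instance] Classical.propDecidable

/-- The commutator `[x,y] = x⁻¹y⁻¹xy` as in the paper. -/
def pcomm (x y : G) : G := x⁻¹ * y⁻¹ * x * y

/-- Transfinite upper central series of the (sub)set `E` of `G`, viewed inside `G`. -/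
noncomputable def ZSet (E : Set G) (α : Ordinal) : Set G :=
  if α = 0 then {1}
  else if hs : ∃ β < α, α = β + 1 then
    {x | x ∈ E ∧ ∀ g ∈ E, pcomm x g ∈ ZSet E hs.choose}
  else ⋃ (β : Ordinal) (_ : β < α), ZSet E β
termination_by α
decreasing_by all_goals first | assumption | exact hs.choose_spec.1

/-- Transfinite iterated centralizers `C_E^α(H)` of `H` inside the ambient set `E ⊆ G`. -/
noncomputable def CIter (E H : Set G) (α : Ordinal) : Set G :=
  if α = 0 then {1}
  else if hs : ∃ β < α, α = β + 1 then
    {x | x ∈ E ∧ (∀ β < α, ∀ a : G, a ∈ CIter E H β ↔ x * a * x⁻¹ ∈ CIter E H β)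
       ∧ ∀ h ∈ H, pcomm x h ∈ CIter E H hs.choose}
  else ⋃ (β : Ordinal) (_ : β < α), CIter E H β
termination_by α
decreasing_by all_goals first | assumption | exact hs.choose_spec.1

/-- Transfinite envelopes `E_α(H)` of `H ⊆ G`. -/
noncomputable def Env (H : Set G) (α : Ordinal) : Set G :=
  if α = 0 then Set.univ
  else if hs : ∃ β < α, α = β + 1 then
    {g | g ∈ Env H hs.choose ∧
      ∀ c ∈ CIter (Env H hs.choose) H (hs.choose + 1),
        pcomm g c ∈ CIter (Env H hs.choose) H hs.choose}
  else ⋂ (β : Ordinal) (_ : β < α), Env H β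
termination_by α
decreasing_by all_goals first | assumption | exact hs.choose_spec.1

end Defs

/-! Every `Z_α(C)` is normal in `C`, so the normalizer condition in `C_C^{β+1}(A)` is vacuous and
the hypothesis reads `Z_{β+1}(C) = {x | [x, A] ⊆ Z_β(C)}`. One shows by induction on `α` that
`C_B^α(A)` and `Z_α(B)` both equal `Z_α(C) ∩ B`. At a successor, each `Z_γ(C) ∩ B` is normalized by
`B`, so `C_B^{β+1}(A) = {x ∈ B | [x, A] ⊆ Z_β(C)} = Z_{β+1}(C) ∩ B`; and
`Z_{β+1}(C) ∩ B ⊆ Z_{β+1}(B) ⊆ {x ∈ B | [x, A] ⊆ Z_β(C)}` since `A ≤ B`. -/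

open Subgroup

@[elab_as_elim]
theorem Ordinal.strong_limit_induction {P : Ordinal → Prop} (zero : P 0)
    (add_one : ∀ β, (∀ γ ≤ β, P γ) → P (β + 1))
    (limit : ∀ α, Order.IsSuccLimit α → (∀ β < α, P β) → P α) (α : Ordinal) : P α := by
  induction α using WellFoundedLT.induction with
  | _ α IH =>
    rcases Ordinal.zero_or_succ_or_isSuccLimit α with rfl | ⟨β, rfl⟩ | hα
    · exact zero
    · rw [Order.succ_eq_add_one] at IH ⊢
      exact add_one β fun γ hγ => IH γ (Order.lt_add_one_iff.mpr hγ)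
    · exact limit α hα IH

section Unfolding
variable {G : Type*} [Group G]

private lemma choose_eq_of_add_one {β : Ordinal} (hs : ∃ γ < β + 1, β + 1 = γ + 1) :
    hs.choose = β :=
  (Order.add_one_inj.mp hs.choose_spec.2).symm

private lemma not_exists_add_one_of_isSuccLimit {α : Ordinal} (hα : Order.IsSuccLimit α) :
    ¬∃ β < α, α = β + 1 := by
  rintro ⟨β, -, rfl⟩
  exact Order.not_isSuccLimit_add_one β hα

lemma ZSet_zero (E : Set G) : ZSet E 0 = {1} := by
  rw [ZSet, if_pos rfl]

lemma ZSet_add_one (E : Set G) (β : Ordinal) :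
    ZSet E (β + 1) = {x | x ∈ E ∧ ∀ g ∈ E, pcomm x g ∈ ZSet E β} := by
  have hs : ∃ γ < β + 1, β + 1 = γ + 1 := ⟨β, Order.lt_add_one_iff.mpr le_rfl, rfl⟩
  rw [ZSet, if_neg ((add_pos_of_right zero_lt_one β).ne'), dif_pos hs, choose_eq_of_add_one hs]

lemma ZSet_of_isSuccLimit (E : Set G) {α : Ordinal} (hα : Order.IsSuccLimit α) :
    ZSet E α = ⋃ β < α, ZSet E β := by
  rw [ZSet, if_neg hα.ne_zero, dif_neg (not_exists_add_one_of_isSuccLimit hα)]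

lemma CIter_zero (E H : Set G) : CIter E H 0 = {1} := by
  rw [CIter, if_pos rfl]

lemma CIter_add_one (E H : Set G) (β : Ordinal) :
    CIter E H (β + 1) = {x | x ∈ E ∧ (∀ γ ≤ β, x ∈ normalizer (CIter E H γ))
      ∧ ∀ h ∈ H, pcomm x h ∈ CIter E H β} := by
  have hs : ∃ γ < β + 1, β + 1 = γ + 1 := ⟨β, Order.lt_add_one_iff.mpr le_rfl, rfl⟩
  rw [CIter, if_neg ((add_pos_of_right zero_lt_one β).ne'), dif_pos hs, choose_eq_of_add_one hs]
  simp only [Order.lt_add_one_iff, mem_set_normalizer_iff]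

lemma CIter_of_isSuccLimit (E H : Set G) {α : Ordinal} (hα : Order.IsSuccLimit α) :
    CIter E H α = ⋃ β < α, CIter E H β := by
  rw [CIter, if_neg hα.ne_zero, dif_neg (not_exists_add_one_of_isSuccLimit hα)]

end Unfolding

section UpperCentralSeries
variable {G : Type*} [Group G]

lemma pcomm_conj (x a g : G) : pcomm (x * a * x⁻¹) g = x * pcomm a (x⁻¹ * g * x) * x⁻¹ := by
  simp only [pcomm]; group

lemma pcomm_mem {B : Subgroup G} {x y : G} (hx : x ∈ B) (hy : y ∈ B) : pcomm x y ∈ B :=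
  mul_mem (mul_mem (mul_mem (inv_mem hx) (inv_mem hy)) hx) hy

lemma mem_normalizer_inter {S T : Set G} {x : G} (hS : x ∈ normalizer S) (hT : x ∈ normalizer T) :
    x ∈ normalizer (S ∩ T) :=
  fun a => and_congr (hS a) (hT a)

lemma conj_mem_ZSet_univ {α : Ordinal} (x : G) {a : G} (ha : a ∈ ZSet (Set.univ : Set G) α) :
    x * a * x⁻¹ ∈ ZSet (Set.univ : Set G) α := by
  induction α using Ordinal.strong_limit_induction generalizing x a with
  | zero =>
    rw [ZSet_zero] at ha ⊢
    simp [Set.mem_singleton_iff.mp ha]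
  | add_one β IH =>
    rw [ZSet_add_one] at ha ⊢
    refine ⟨trivial, fun g _ => ?_⟩
    rw [pcomm_conj]
    exact IH β le_rfl x (ha.2 _ trivial)
  | limit α hα IH =>
    rw [ZSet_of_isSuccLimit _ hα] at ha ⊢
    simp only [Set.mem_iUnion] at ha ⊢
    obtain ⟨β, hβ, ha⟩ := ha
    exact ⟨β, hβ, IH β hβ x ha⟩

lemma mem_normalizer_ZSet_univ (x : G) (α : Ordinal) :
    x ∈ normalizer (ZSet (Set.univ : Set G) α) :=
  fun _ => ⟨conj_mem_ZSet_univ x, fun ha => by simpa [mul_assoc] using conj_mem_ZSet_univ x⁻¹ ha⟩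

lemma ZSet_univ_inter_subset (B : Subgroup G) (α : Ordinal) :
    ZSet (Set.univ : Set G) α ∩ B ⊆ ZSet (B : Set G) α := by
  induction α using Ordinal.strong_limit_induction with
  | zero =>
    rw [ZSet_zero, ZSet_zero]
    exact Set.inter_subset_left
  | add_one β IH =>
    rw [ZSet_add_one, ZSet_add_one]
    rintro x ⟨hxZ, hxB⟩
    exact ⟨hxB, fun g hg => IH β le_rfl ⟨hxZ.2 g trivial, pcomm_mem hxB hg⟩⟩
  | limit α hα IH =>
    rw [ZSet_of_isSuccLimit _ hα, ZSet_of_isSuccLimit _ hα, Set.iUnion₂_inter]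
    exact Set.iUnion₂_mono IH

end UpperCentralSeries

section IteratedCentralizers
variable {G : Type*} [Group G]

lemma CIter_add_one_of_forall_le {E H : Set G} {S : Ordinal → Set G} {β : Ordinal}
    (hS : ∀ γ ≤ β, CIter E H γ = S γ) (hnorm : ∀ γ ≤ β, ∀ x ∈ E, x ∈ normalizer (S γ)) :
    CIter E H (β + 1) = {x | x ∈ E ∧ ∀ h ∈ H, pcomm x h ∈ S β} := by
  ext x
  simp only [CIter_add_one, Set.mem_ofPred_eq, hS β le_rfl]
  exact and_congr_right fun hx => and_iff_right fun γ hγ => hS γ hγ ▸ hnorm γ hγ x hx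

lemma ZSet_univ_add_one_of_CIter_eq {H : Set G} {β : Ordinal}
    (hU : ∀ γ ≤ β + 1, CIter Set.univ H γ = ZSet Set.univ γ) :
    ZSet (Set.univ : Set G) (β + 1) = {x | ∀ h ∈ H, pcomm x h ∈ ZSet Set.univ β} := by
  rw [← hU _ le_rfl, CIter_add_one_of_forall_le (fun γ hγ => hU γ (hγ.trans le_self_add))
    fun γ _ x _ => mem_normalizer_ZSet_univ x γ]
  simp

variable {A B : Subgroup G} {lam : Ordinal}

lemma CIter_eq_ZSet_univ_inter_add_one (hAB : A ≤ B) {β : Ordinal}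
    (hU : ∀ γ ≤ β + 1, CIter Set.univ (A : Set G) γ = ZSet Set.univ γ)
    (hC : ∀ γ ≤ β, CIter (B : Set G) A γ = ZSet Set.univ γ ∩ B) :
    CIter (B : Set G) A (β + 1) = ZSet Set.univ (β + 1) ∩ B := by
  rw [CIter_add_one_of_forall_le hC fun γ _ x hx =>
    mem_normalizer_inter (mem_normalizer_ZSet_univ x γ) (le_normalizer (H := B) hx),
    ZSet_univ_add_one_of_CIter_eq hU]
  ext x
  simp only [Set.mem_ofPred_eq, Set.mem_inter_iff, SetLike.mem_coe]
  exact ⟨fun ⟨hxB, hx⟩ => ⟨fun a ha => (hx a ha).1, hxB⟩,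
    fun ⟨hx, hxB⟩ => ⟨hxB, fun a ha => ⟨hx a ha, pcomm_mem hxB (hAB ha)⟩⟩⟩

lemma ZSet_eq_ZSet_univ_inter_add_one (hAB : A ≤ B) {β : Ordinal}
    (hU : ∀ γ ≤ β + 1, CIter Set.univ (A : Set G) γ = ZSet Set.univ γ)
    (hZ : ZSet (B : Set G) β = ZSet Set.univ β ∩ B) :
    ZSet (B : Set G) (β + 1) = ZSet Set.univ (β + 1) ∩ B := by
  refine (Set.Subset.antisymm ?_ (ZSet_univ_inter_subset B _))
  rw [ZSet_add_one, hZ, ZSet_univ_add_one_of_CIter_eq hU]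
  exact fun x ⟨hxB, hx⟩ => ⟨fun a ha => (hx a (hAB ha)).1, hxB⟩

theorem CIter_and_ZSet_eq_ZSet_univ_inter (hAB : A ≤ B)
    (hU : ∀ α ≤ lam, CIter Set.univ (A : Set G) α = ZSet Set.univ α) (α : Ordinal) :
    α ≤ lam → CIter (B : Set G) A α = ZSet Set.univ α ∩ B ∧
      ZSet (B : Set G) α = ZSet Set.univ α ∩ B := by
  induction α using Ordinal.strong_limit_induction with
  | zero =>
    intro
    rw [CIter_zero, ZSet_zero, ZSet_zero, Set.singleton_inter_of_mem (one_mem B)]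
    exact ⟨rfl, rfl⟩
  | add_one β IH =>
    intro hβ
    have hU' γ (hγ : γ ≤ β + 1) := hU γ (hγ.trans hβ)
    have IH' γ (hγ : γ ≤ β) := IH γ hγ ((hγ.trans le_self_add).trans hβ)
    exact ⟨CIter_eq_ZSet_univ_inter_add_one hAB hU' fun γ hγ => (IH' γ hγ).1,
      ZSet_eq_ZSet_univ_inter_add_one hAB hU' (IH' β le_rfl).2⟩
  | limit α hα IH =>
    intro hαlam
    have IH' β (hβ : β < α) := IH β hβ (hβ.le.trans hαlam)
    rw [CIter_of_isSuccLimit _ _ hα, ZSet_of_isSuccLimit _ hα, ZSet_of_isSuccLimit _ hα,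
      Set.iUnion₂_inter]
    exact ⟨Set.iUnion₂_congr fun β hβ => (IH' β hβ).1, Set.iUnion₂_congr fun β hβ => (IH' β hβ).2⟩

end IteratedCentralizers

theorem stmt6 {C : Type*} [Group C] (A B : Subgroup C) (hAB : A ≤ B) (lam : Ordinal)
    (h : ∀ α ≤ lam, CIter (Set.univ : Set C) (A : Set C) α = ZSet (Set.univ : Set C) α) :
    ∀ α ≤ lam,
      CIter (B : Set C) (A : Set C) α = ZSet (B : Set C) α ∧
      ZSet (B : Set C) α = ZSet (Set.univ : Set C) α ∩ (B : Set C) := by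
  intro α hα
  obtain ⟨hC, hZ⟩ := CIter_and_ZSet_eq_ZSet_univ_inter hAB h α hα
  exact ⟨hC.trans hZ.symm, hZ⟩
end

section
/- Let G be a group and H ≤ G. For all ordinals α ≤ λ, Z_α(E_α(H)) ≤ Z_λ(E_λ(H)). -/
open Ordinal

section Defs
variable {G : Type*} [Group G]

attribute [local instance] Classical.propDecidable

end Defs

/-! By a simultaneous transfinite induction, each envelope `E_μ` is a subgroup containing `H`
that normalizes every `C^ρ_{E_μ}(H)` with `ρ ≤ μ`. The normalizing property comes from the
commutator condition defining `E_{γ+1}`, transported from `E_γ` to the smaller `E_μ` through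
`C^β_{E_μ}(H) = C^β_{E_γ}(H) ∩ E_μ` for `β ≤ γ + 1`. Normalization gives `Z_β(E) ⊆ C^β_E(H)` for
`E = E_β`, and since `[C^β, C^{β+1}] ⊆ C^β` this puts `Z_β(E_β)` inside `E_{β+1}`. Hence
`Z_α(E_α) ⊆ E_λ` for `α < λ`, and then `Z_α(E_α) ⊆ Z_α(E_λ) ⊆ Z_λ(E_λ)`. -/

open Order Subgroup

namespace Envelope

theorem choose_eq_of_eq_add_one {β : Ordinal} (hs : ∃ γ < β + 1, β + 1 = γ + 1) :
    hs.choose = β := by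
  have h : succ β = succ hs.choose := by simpa only [succ_eq_add_one] using hs.choose_spec.2
  exact (succ_injective h).symm

theorem not_exists_eq_add_one_of_isSuccLimit {α : Ordinal} (hα : IsSuccLimit α) :
    ¬∃ β < α, α = β + 1 := by
  rintro ⟨β, -, rfl⟩
  exact not_isSuccLimit_add_one β hα

theorem zero_or_add_one_or_isSuccLimit (α : Ordinal) :
    α = 0 ∨ (∃ β, α = β + 1) ∨ IsSuccLimit α := by
  rcases Ordinal.zero_or_succ_or_isSuccLimit α with h | ⟨β, rfl⟩ | h
  · exact .inl h
  · exact .inr (.inl ⟨β, succ_eq_add_one β⟩)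
  · exact .inr (.inr h)

@[elab_as_elim]
theorem ordinal_induction {p : Ordinal → Prop} (α : Ordinal) (zero : p 0)
    (add_one : ∀ β, (∀ γ ≤ β, p γ) → p (β + 1))
    (limit : ∀ α, IsSuccLimit α → (∀ β < α, p β) → p α) : p α := by
  induction α using WellFoundedLT.induction with
  | _ α ih =>
    rcases zero_or_add_one_or_isSuccLimit α with rfl | ⟨β, rfl⟩ | hα
    · exact zero
    · exact add_one β fun γ hγ => ih γ (lt_add_one_iff.mpr hγ)
    · exact limit α hα ih

variable {G : Type*} [Group G] {E H : Set G} {x : G} {α β : Ordinal}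

theorem mem_ZSet_zero : x ∈ ZSet E 0 ↔ x = 1 := by
  rw [ZSet]; simp

theorem mem_ZSet_add_one : x ∈ ZSet E (β + 1) ↔ x ∈ E ∧ ∀ g ∈ E, pcomm x g ∈ ZSet E β := by
  rw [ZSet, if_neg (by positivity), dif_pos ⟨β, lt_add_one β, rfl⟩,
    choose_eq_of_eq_add_one]
  rfl

theorem mem_ZSet_of_isSuccLimit (hα : IsSuccLimit α) :
    x ∈ ZSet E α ↔ ∃ β < α, x ∈ ZSet E β := by
  rw [ZSet, if_neg hα.ne_zero, dif_neg (not_exists_eq_add_one_of_isSuccLimit hα)]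
  simp

theorem mem_CIter_zero : x ∈ CIter E H 0 ↔ x = 1 := by
  rw [CIter]; simp

theorem mem_CIter_add_one :
    x ∈ CIter E H (β + 1) ↔ x ∈ E ∧ (∀ γ ≤ β, x ∈ normalizer (CIter E H γ)) ∧
      ∀ h ∈ H, pcomm x h ∈ CIter E H β := by
  rw [CIter, if_neg (by positivity), dif_pos ⟨β, lt_add_one β, rfl⟩,
    choose_eq_of_eq_add_one]
  simp only [lt_add_one_iff]
  rfl

theorem mem_CIter_of_isSuccLimit (hα : IsSuccLimit α) :
    x ∈ CIter E H α ↔ ∃ β < α, x ∈ CIter E H β := by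
  rw [CIter, if_neg hα.ne_zero, dif_neg (not_exists_eq_add_one_of_isSuccLimit hα)]
  simp

theorem Env_zero : Env H 0 = Set.univ := by
  rw [Env]; simp

theorem mem_Env_add_one :
    x ∈ Env H (β + 1) ↔ x ∈ Env H β ∧
      ∀ c ∈ CIter (Env H β) H (β + 1), pcomm x c ∈ CIter (Env H β) H β := by
  rw [Env, if_neg (by positivity), dif_pos ⟨β, lt_add_one β, rfl⟩,
    choose_eq_of_eq_add_one]
  rfl

theorem mem_Env_of_isSuccLimit (hα : IsSuccLimit α) :
    x ∈ Env H α ↔ ∀ β < α, x ∈ Env H β := by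
  rw [Env, if_neg hα.ne_zero, dif_neg (not_exists_eq_add_one_of_isSuccLimit hα)]
  simp

theorem pcomm_one_left (y : G) : pcomm 1 y = 1 := by
  simp [pcomm]

theorem pcomm_inv (x y : G) : (pcomm x y)⁻¹ = pcomm y x := by
  simp only [pcomm]; group

theorem pcomm_mem {K : Subgroup G} {x y : G} (hx : x ∈ K) (hy : y ∈ K) : pcomm x y ∈ K :=
  K.mul_mem (K.mul_mem (K.mul_mem (K.inv_mem hx) (K.inv_mem hy)) hx) hy

section ZSet

variable {E' : Set G}

theorem ZSet_subset (h1 : (1 : G) ∈ E) (α : Ordinal) : ZSet E α ⊆ E := by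
  induction α using ordinal_induction with
  | zero => intro x hx; rw [mem_ZSet_zero.mp hx]; exact h1
  | add_one β _ => exact fun x hx => (mem_ZSet_add_one.mp hx).1
  | limit α hα ih =>
    intro x hx
    obtain ⟨β, hβ, hxβ⟩ := (mem_ZSet_of_isSuccLimit hα).mp hx
    exact ih β hβ hxβ

theorem ZSet_subset_ZSet_add_one (h1 : (1 : G) ∈ E) (α : Ordinal) :
    ZSet E α ⊆ ZSet E (α + 1) := by
  induction α using ordinal_induction with
  | zero =>
    intro x hx
    rw [mem_ZSet_zero.mp hx]
    exact mem_ZSet_add_one.mpr ⟨h1, fun g _ => mem_ZSet_zero.mpr (pcomm_one_left g)⟩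
  | add_one β ih =>
    intro x hx
    obtain ⟨hxE, hxc⟩ := mem_ZSet_add_one.mp hx
    exact mem_ZSet_add_one.mpr ⟨hxE, fun g hg => ih β le_rfl (hxc g hg)⟩
  | limit α hα ih =>
    intro x hx
    obtain ⟨β, hβ, hxβ⟩ := (mem_ZSet_of_isSuccLimit hα).mp hx
    obtain ⟨hxE, hxc⟩ := mem_ZSet_add_one.mp (ih β hβ hxβ)
    exact mem_ZSet_add_one.mpr
      ⟨hxE, fun g hg => (mem_ZSet_of_isSuccLimit hα).mpr ⟨β, hβ, hxc g hg⟩⟩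

theorem ZSet_mono (h1 : (1 : G) ∈ E) : Monotone (ZSet E) := by
  intro α β hαβ
  induction β using ordinal_induction with
  | zero => rw [nonpos_iff_eq_zero.mp hαβ]
  | add_one β ih =>
    rcases hαβ.lt_or_eq with h | rfl
    · exact (ih β le_rfl (lt_add_one_iff.mp h)).trans (ZSet_subset_ZSet_add_one h1 β)
    · exact le_rfl
  | limit β hβ _ =>
    rcases hαβ.lt_or_eq with h | rfl
    · exact fun x hx => (mem_ZSet_of_isSuccLimit hβ).mpr ⟨α, h, hx⟩
    · exact le_rfl

theorem ZSet_subset_ZSet_of_subset (h1 : (1 : G) ∈ E') (hE : E' ⊆ E) (h : ZSet E α ⊆ E') :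
    ZSet E α ⊆ ZSet E' α := by
  induction α using ordinal_induction with
  | zero => exact fun x hx => mem_ZSet_zero.mpr (mem_ZSet_zero.mp hx)
  | add_one β ih =>
    intro x hx
    have hβ : ZSet E β ⊆ E' := (ZSet_subset_ZSet_add_one (hE h1) β).trans h
    exact mem_ZSet_add_one.mpr
      ⟨h hx, fun g hg => ih β le_rfl hβ ((mem_ZSet_add_one.mp hx).2 g (hE hg))⟩
  | limit α hα ih =>
    intro x hx
    obtain ⟨β, hβ, hxβ⟩ := (mem_ZSet_of_isSuccLimit hα).mp hx
    exact (mem_ZSet_of_isSuccLimit hα).mpr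
      ⟨β, hβ, ih β hβ ((ZSet_mono (hE h1) hβ.le).trans h) hxβ⟩

end ZSet

section CIter

theorem one_mem_CIter (h1 : (1 : G) ∈ E) (α : Ordinal) : (1 : G) ∈ CIter E H α := by
  induction α using ordinal_induction with
  | zero => exact mem_CIter_zero.mpr rfl
  | add_one β ih =>
    exact mem_CIter_add_one.mpr
      ⟨h1, fun γ _ => one_mem _, fun h _ => (pcomm_one_left h).symm ▸ ih β le_rfl⟩
  | limit α hα _ => exact (mem_CIter_of_isSuccLimit hα).mpr ⟨0, hα.pos, mem_CIter_zero.mpr rfl⟩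

theorem CIter_subset (h1 : (1 : G) ∈ E) (α : Ordinal) : CIter E H α ⊆ E := by
  induction α using ordinal_induction with
  | zero => intro x hx; rw [mem_CIter_zero.mp hx]; exact h1
  | add_one β _ => exact fun x hx => (mem_CIter_add_one.mp hx).1
  | limit α hα ih =>
    intro x hx
    obtain ⟨β, hβ, hxβ⟩ := (mem_CIter_of_isSuccLimit hα).mp hx
    exact ih β hβ hxβ

-- Each of these properties at level `ℓ` needs the others at lower levels.
structure CIterInvariants (K : Subgroup G) (H : Set G) (ℓ : Ordinal) : Prop where
  mono : ∀ β ≤ ℓ, CIter K H β ⊆ CIter K H ℓ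
  inv_mem : ∀ x ∈ CIter K H ℓ, x⁻¹ ∈ CIter K H ℓ
  mul_mem : ∀ x ∈ CIter K H ℓ, ∀ y ∈ CIter K H ℓ, x * y ∈ CIter K H ℓ
  subset_normalizer : ∀ β < ℓ, CIter K H ℓ ⊆ normalizer (CIter K H β)
  pcomm_mem : ∀ x ∈ CIter K H ℓ, ∀ h ∈ H, pcomm x h ∈ CIter K H ℓ

variable {K : Subgroup G}

def CIterInvariants.subgroup {ℓ : Ordinal} (h : CIterInvariants K H ℓ) : Subgroup G where
  carrier := CIter K H ℓ
  one_mem' := one_mem_CIter K.one_mem ℓ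
  mul_mem' hx hy := h.mul_mem _ hx _ hy
  inv_mem' hx := h.inv_mem _ hx

theorem CIterInvariants.zero : CIterInvariants K H 0 where
  mono β hβ := by rw [nonpos_iff_eq_zero.mp hβ]
  inv_mem x hx := by rw [mem_CIter_zero.mp hx, inv_one]; exact mem_CIter_zero.mpr rfl
  mul_mem x hx y hy := by
    rw [mem_CIter_zero.mp hx, mem_CIter_zero.mp hy, one_mul]; exact mem_CIter_zero.mpr rfl
  subset_normalizer β hβ := (not_lt_zero hβ).elim
  pcomm_mem x hx h _ := by rw [mem_CIter_zero.mp hx, pcomm_one_left]; exact mem_CIter_zero.mpr rfl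

theorem CIterInvariants.add_one (hβ : CIterInvariants K H β) : CIterInvariants K H (β + 1) := by
  have step : CIter K H β ⊆ CIter K H (β + 1) := by
    refine fun x hx => mem_CIter_add_one.mpr
      ⟨CIter_subset K.one_mem β hx, fun γ hγ => ?_, fun h hh => hβ.pcomm_mem x hx h hh⟩
    rcases hγ.lt_or_eq with hγ | rfl
    · exact hβ.subset_normalizer γ hγ hx
    · exact le_normalizer (H := hβ.subgroup) hx
  refine ⟨fun γ hγ => ?_, fun x hx => ?_, fun x hx y hy => ?_, fun γ hγ x hx => ?_,
    fun x hx h hh => step ((mem_CIter_add_one.mp hx).2.2 h hh)⟩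
  · rcases hγ.lt_or_eq with hγ | rfl
    · exact (hβ.mono γ (lt_add_one_iff.mp hγ)).trans step
    · exact subset_rfl
  · obtain ⟨hxK, hxN, hxH⟩ := mem_CIter_add_one.mp hx
    refine mem_CIter_add_one.mpr ⟨K.inv_mem hxK, fun γ hγ => Subgroup.inv_mem _ (hxN γ hγ), fun h hh => ?_⟩
    rw [show pcomm x⁻¹ h = x * (pcomm x h)⁻¹ * x⁻¹ by simp only [pcomm]; group]
    exact (hxN β le_rfl _).mp (hβ.inv_mem _ (hxH h hh))
  · obtain ⟨hxK, hxN, hxH⟩ := mem_CIter_add_one.mp hx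
    obtain ⟨hyK, hyN, hyH⟩ := mem_CIter_add_one.mp hy
    refine mem_CIter_add_one.mpr
      ⟨K.mul_mem hxK hyK, fun γ hγ => Subgroup.mul_mem _ (hxN γ hγ) (hyN γ hγ), fun h hh => ?_⟩
    rw [show pcomm (x * y) h = y⁻¹ * pcomm x h * y * pcomm y h by simp only [pcomm]; group]
    exact hβ.mul_mem _ ((mem_set_normalizer_iff''.mp (hyN β le_rfl) _).mp (hxH h hh)) _ (hyH h hh)
  · exact (mem_CIter_add_one.mp hx).2.1 γ (lt_add_one_iff.mp hγ)

theorem CIterInvariants.of_isSuccLimit {ℓ : Ordinal} (hℓ : IsSuccLimit ℓ)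
    (ih : ∀ β < ℓ, CIterInvariants K H β) : CIterInvariants K H ℓ := by
  have mem : ∀ {x}, x ∈ CIter K H ℓ ↔ ∃ β < ℓ, x ∈ CIter K H β := mem_CIter_of_isSuccLimit hℓ
  refine ⟨fun β hβ => ?_, fun x hx => ?_, fun x hx y hy => ?_, fun β hβ x hx => ?_,
    fun x hx h hh => ?_⟩
  · rcases hβ.lt_or_eq with hβ | rfl
    · exact fun x hx => mem.mpr ⟨β, hβ, hx⟩
    · exact subset_rfl
  · obtain ⟨β, hβ, hxβ⟩ := mem.mp hx
    exact mem.mpr ⟨β, hβ, (ih β hβ).inv_mem x hxβ⟩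
  · obtain ⟨β, hβ, hxβ⟩ := mem.mp hx
    obtain ⟨γ, hγ, hyγ⟩ := mem.mp hy
    have hmax := ih (max β γ) (max_lt hβ hγ)
    exact mem.mpr ⟨max β γ, max_lt hβ hγ, hmax.mul_mem _ (hmax.mono β (le_max_left β γ) hxβ)
      _ (hmax.mono γ (le_max_right β γ) hyγ)⟩
  · obtain ⟨γ, hγ, hxγ⟩ := mem.mp hx
    have hmax := ih (max γ (β + 1)) (max_lt hγ (hℓ.add_one_lt hβ))
    exact hmax.subset_normalizer β ((lt_add_one β).trans_le (le_max_right γ (β + 1)))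
      (hmax.mono γ (le_max_left γ (β + 1)) hxγ)
  · obtain ⟨β, hβ, hxβ⟩ := mem.mp hx
    exact mem.mpr ⟨β, hβ, (ih β hβ).pcomm_mem x hxβ h hh⟩

theorem cIterInvariants (K : Subgroup G) (H : Set G) (ℓ : Ordinal) : CIterInvariants K H ℓ := by
  induction ℓ using ordinal_induction with
  | zero => exact .zero
  | add_one β ih => exact (ih β le_rfl).add_one
  | limit ℓ hℓ ih => exact .of_isSuccLimit hℓ ih

def cIterSubgroup (K : Subgroup G) (H : Set G) (ℓ : Ordinal) : Subgroup G :=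
  (cIterInvariants K H ℓ).subgroup

theorem CIter_mono : Monotone (CIter K H) :=
  fun β ℓ h => (cIterInvariants K H ℓ).mono β h

theorem CIter_subset_normalizer {β ℓ : Ordinal} (h : β < ℓ) :
    CIter K H ℓ ⊆ normalizer (CIter K H β) :=
  (cIterInvariants K H ℓ).subset_normalizer β h

theorem pcomm_mem_CIter_of_mem_add_one {x c : G} (hx : x ∈ CIter K H β)
    (hc : c ∈ CIter K H (β + 1)) : pcomm x c ∈ CIter K H β := by
  have hcx : c⁻¹ * x * c ∈ CIter K H β :=
    (mem_set_normalizer_iff''.mp (CIter_subset_normalizer (lt_add_one β) hc) x).mp hx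
  rw [show pcomm x c = x⁻¹ * (c⁻¹ * x * c) by simp only [pcomm]; group]
  exact (cIterSubgroup K H β).mul_mem ((cIterSubgroup K H β).inv_mem hx) hcx

theorem ZSet_subset_CIter (hH : H ⊆ K) {δ : Ordinal}
    (hK : ∀ ρ < δ, K ≤ normalizer (CIter K H ρ)) : ZSet K δ ⊆ CIter K H δ := by
  induction δ using ordinal_induction with
  | zero => exact fun x hx => mem_CIter_zero.mpr (mem_ZSet_zero.mp hx)
  | add_one β ih =>
    intro x hx
    obtain ⟨hxK, hxc⟩ := mem_ZSet_add_one.mp hx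
    exact mem_CIter_add_one.mpr ⟨hxK, fun γ hγ => hK γ (lt_add_one_iff.mpr hγ) hxK,
      fun h hh => ih β le_rfl (fun ρ hρ => hK ρ (hρ.trans (lt_add_one β))) (hxc h (hH hh))⟩
  | limit δ hδ ih =>
    intro x hx
    obtain ⟨β, hβ, hxβ⟩ := (mem_ZSet_of_isSuccLimit hδ).mp hx
    exact (mem_CIter_of_isSuccLimit hδ).mpr
      ⟨β, hβ, ih β hβ (fun ρ hρ => hK ρ (hρ.trans hβ)) hxβ⟩

theorem CIter_eq_inter {K' : Subgroup G} (hK' : K' ≤ K) (hH : H ⊆ K') {β : Ordinal}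
    (hK : ∀ ρ < β, K ≤ normalizer (CIter K H ρ)) : CIter K' H β = CIter K H β ∩ K' := by
  induction β using ordinal_induction with
  | zero =>
    ext x
    simp only [Set.mem_inter_iff, mem_CIter_zero]
    exact ⟨fun hx => ⟨hx, hx ▸ K'.one_mem⟩, And.left⟩
  | add_one β ih =>
    have ih' : ∀ γ ≤ β, CIter K' H γ = CIter K H γ ∩ K' := fun γ hγ =>
      ih γ hγ fun ρ hρ => hK ρ (hρ.trans_le (hγ.trans (lt_add_one β).le))
    ext x
    rw [Set.mem_inter_iff, mem_CIter_add_one, mem_CIter_add_one, ih' β le_rfl]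
    constructor
    · rintro ⟨hx', -, hxH⟩
      exact ⟨⟨hK' hx', fun γ hγ => hK γ (lt_add_one_iff.mpr hγ) (hK' hx'),
        fun h hh => (hxH h hh).1⟩, hx'⟩
    · rintro ⟨⟨-, hxN, hxH⟩, hx'⟩
      refine ⟨hx', fun γ hγ => ?_, fun h hh => ⟨hxH h hh, pcomm_mem hx' (hH hh)⟩⟩
      rw [ih' γ hγ]
      exact inf_normalizer_le_normalizer_inf (H := cIterSubgroup K H γ) ⟨hxN γ hγ, le_normalizer hx'⟩
  | limit β hβ ih =>
    ext x
    simp only [Set.mem_inter_iff, mem_CIter_of_isSuccLimit hβ]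
    constructor
    · rintro ⟨γ, hγ, hx⟩
      rw [ih γ hγ fun ρ hρ => hK ρ (hρ.trans hγ)] at hx
      exact ⟨⟨γ, hγ, hx.1⟩, hx.2⟩
    · rintro ⟨⟨γ, hγ, hx⟩, hx'⟩
      exact ⟨γ, hγ, by rw [ih γ hγ fun ρ hρ => hK ρ (hρ.trans hγ)]; exact ⟨hx, hx'⟩⟩

theorem le_normalizer_CIter {μ : Ordinal}
    (hK : ∀ γ, γ + 1 ≤ μ → ∀ g ∈ K, ∀ a ∈ CIter K H (γ + 1), pcomm g a ∈ CIter K H γ)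
    {ρ : Ordinal} (hρ : ρ ≤ μ) : K ≤ normalizer (CIter K H ρ) := by
  suffices ∀ g ∈ K, ∀ d ∈ CIter K H ρ, g * d * g⁻¹ ∈ CIter K H ρ from
    (le_normalizer_iff (K := cIterSubgroup K H ρ)).mpr this
  induction ρ using ordinal_induction with
  | zero =>
    intro g _ d hd
    rw [mem_CIter_zero.mp hd, mul_one, mul_inv_cancel]
    exact mem_CIter_zero.mpr rfl
  | add_one ς _ =>
    intro g hg d hd
    have hc : pcomm g⁻¹ d ∈ CIter K H (ς + 1) :=
      CIter_mono (lt_add_one ς).le (hK ς hρ g⁻¹ (K.inv_mem hg) d hd)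
    rw [show g * d * g⁻¹ = d * (pcomm g⁻¹ d)⁻¹ by simp only [pcomm]; group]
    exact (cIterSubgroup K H (ς + 1)).mul_mem hd ((cIterSubgroup K H (ς + 1)).inv_mem hc)
  | limit ρ hρlim ih =>
    intro g hg d hd
    obtain ⟨β, hβ, hdβ⟩ := (mem_CIter_of_isSuccLimit hρlim).mp hd
    exact (mem_CIter_of_isSuccLimit hρlim).mpr ⟨β, hβ, ih β hβ (hβ.le.trans hρ) g hg d hdβ⟩

end CIter

theorem exists_subgroup_mem_iff_pcomm_mem (K A B : Subgroup G) (hK : K ≤ normalizer A)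
    (hB : B ≤ normalizer A) : ∃ L : Subgroup G, ∀ g, g ∈ L ↔ g ∈ K ∧ ∀ c ∈ B, pcomm g c ∈ A := by
  refine ⟨{ carrier := {g | g ∈ K ∧ ∀ c ∈ B, pcomm g c ∈ A}
            one_mem' := ⟨K.one_mem, fun c _ => (pcomm_one_left c).symm ▸ A.one_mem⟩
            mul_mem' := fun {x y} hx hy => ⟨K.mul_mem hx.1 hy.1, fun c hc => ?_⟩
            inv_mem' := fun {x} hx => ⟨K.inv_mem hx.1, fun c hc => ?_⟩ }, fun g => Iff.rfl⟩
  · rw [show pcomm (x * y) c = y⁻¹ * pcomm x c * y * pcomm y c by simp only [pcomm]; group]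
    exact A.mul_mem ((mem_normalizer_iff''.mp (hK hy.1) _).mp (hx.2 c hc)) (hy.2 c hc)
  · rw [show pcomm x⁻¹ c = c⁻¹ * (x * pcomm x c⁻¹ * x⁻¹) * c by simp only [pcomm]; group]
    exact (mem_normalizer_iff''.mp (hB hc) _).mp
      ((mem_normalizer_iff.mp (hK hx.1) _).mp (hx.2 c⁻¹ (B.inv_mem hc)))

section Env

theorem Env_antitone (H : Set G) : Antitone (Env H) := by
  intro α β hαβ
  induction β using ordinal_induction with
  | zero => rw [nonpos_iff_eq_zero.mp hαβ]
  | add_one β ih =>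
    rcases hαβ.lt_or_eq with h | rfl
    · exact fun x hx => ih β le_rfl (lt_add_one_iff.mp h) (mem_Env_add_one.mp hx).1
    · exact le_rfl
  | limit β hβ _ =>
    rcases hαβ.lt_or_eq with h | rfl
    · exact fun x hx => (mem_Env_of_isSuccLimit hβ).mp hx α h
    · exact le_rfl

theorem mem_Env_of_forall_lt {μ : Ordinal} (hx : ∀ σ < μ, x ∈ Env H (σ + 1)) : x ∈ Env H μ := by
  rcases zero_or_add_one_or_isSuccLimit μ with rfl | ⟨β, rfl⟩ | hμ
  · rw [Env_zero]; trivial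
  · exact hx β (lt_add_one β)
  · exact (mem_Env_of_isSuccLimit hμ).mpr fun σ hσ =>
      Env_antitone H (lt_add_one σ).le (hx σ hσ)

variable {K : Subgroup G}

theorem mem_Env_add_one_of_coe_eq (hK : (K : Set G) = Env H β) :
    x ∈ Env H (β + 1) ↔ x ∈ K ∧ ∀ c ∈ CIter K H (β + 1), pcomm x c ∈ CIter K H β := by
  rw [mem_Env_add_one, ← hK]
  rfl

theorem exists_subgroup_Env_add_one (hK : (K : Set G) = Env H β) (hHK : H ⊆ K)
    (hnorm : K ≤ normalizer (CIter K H β)) :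
    ∃ L : Subgroup G, (L : Set G) = Env H (β + 1) ∧ H ⊆ L := by
  obtain ⟨L, hL⟩ := exists_subgroup_mem_iff_pcomm_mem K (cIterSubgroup K H β)
    (cIterSubgroup K H (β + 1)) hnorm fun c hc => CIter_subset_normalizer (lt_add_one β) hc
  refine ⟨L, Set.ext fun g => (hL g).trans (mem_Env_add_one_of_coe_eq hK).symm,
    fun h hh => (hL h).mpr ⟨hHK hh, fun c hc => ?_⟩⟩
  rw [← pcomm_inv]
  exact (cIterSubgroup K H β).inv_mem ((mem_CIter_add_one.mp hc).2.2 h hh)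

theorem exists_subgroup_Env_of_isSuccLimit {μ : Ordinal} (hμ : IsSuccLimit μ)
    (ih : ∀ σ < μ, ∃ K : Subgroup G, (K : Set G) = Env H σ ∧ H ⊆ K) :
    ∃ L : Subgroup G, (L : Set G) = Env H μ ∧ H ⊆ L := by
  choose K hK hHK using ih
  refine ⟨⨅ σ, ⨅ hσ : σ < μ, K σ hσ, ?_, fun h hh => ?_⟩
  · ext x
    simp [hK, mem_Env_of_isSuccLimit hμ]
  · simp only [SetLike.mem_coe, Subgroup.mem_iInf]
    exact fun σ hσ => hHK σ hσ hh

theorem pcomm_mem_CIter_Env {γ μ : Ordinal} {Kγ : Subgroup G} (hK : (K : Set G) = Env H μ)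
    (hHK : H ⊆ K) (hKγ : (Kγ : Set G) = Env H γ)
    (hnormγ : ∀ ρ ≤ γ, Kγ ≤ normalizer (CIter Kγ H ρ)) (hγμ : γ + 1 ≤ μ) {g a : G}
    (hg : g ∈ K) (ha : a ∈ CIter K H (γ + 1)) : pcomm g a ∈ CIter K H γ := by
  have hKKγ : K ≤ Kγ := fun x hx => by
    rw [← SetLike.mem_coe, hKγ]
    exact Env_antitone H ((lt_add_one γ).le.trans hγμ) (hK ▸ hx)
  have hrestr : ∀ β ≤ γ + 1, CIter K H β = CIter Kγ H β ∩ K := fun β hβ =>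
    CIter_eq_inter hKKγ hHK fun ρ hρ => hnormγ ρ (lt_add_one_iff.mp (hρ.trans_le hβ))
  have hgγ : g ∈ Env H (γ + 1) := Env_antitone H hγμ (hK ▸ hg)
  rw [hrestr (γ + 1) le_rfl] at ha
  rw [hrestr γ (lt_add_one γ).le]
  exact ⟨((mem_Env_add_one_of_coe_eq hKγ).mp hgγ).2 a ha.1, pcomm_mem hg ha.2⟩

theorem exists_subgroup_Env (H : Set G) (μ : Ordinal) :
    ∃ K : Subgroup G, (K : Set G) = Env H μ ∧ H ⊆ K ∧
      ∀ ρ ≤ μ, K ≤ normalizer (CIter K H ρ) := by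
  induction μ using WellFoundedLT.induction with
  | _ μ ih =>
  obtain ⟨K, hK, hHK⟩ : ∃ K : Subgroup G, (K : Set G) = Env H μ ∧ H ⊆ K := by
    rcases zero_or_add_one_or_isSuccLimit μ with rfl | ⟨β, rfl⟩ | hμ
    · exact ⟨⊤, by rw [Env_zero]; rfl, fun _ _ => trivial⟩
    · obtain ⟨K, hK, hHK, hnorm⟩ := ih β (lt_add_one β)
      exact exists_subgroup_Env_add_one hK hHK (hnorm β le_rfl)
    · exact exists_subgroup_Env_of_isSuccLimit hμ fun σ hσ =>
        (ih σ hσ).imp fun _ hK => ⟨hK.1, hK.2.1⟩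
  refine ⟨K, hK, hHK, fun ρ => le_normalizer_CIter fun γ hγμ g hg a ha => ?_⟩
  obtain ⟨Kγ, hKγ, -, hnormγ⟩ := ih γ (add_one_le_iff.mp hγμ)
  exact pcomm_mem_CIter_Env hK hHK hKγ hnormγ hγμ hg ha

theorem one_mem_Env (H : Set G) (μ : Ordinal) : (1 : G) ∈ Env H μ := by
  obtain ⟨K, hK, -⟩ := exists_subgroup_Env H μ
  exact hK ▸ K.one_mem

theorem ZSet_Env_subset_Env_add_one (H : Set G) (β : Ordinal) :
    ZSet (Env H β) β ⊆ Env H (β + 1) := by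
  obtain ⟨K, hK, hHK, hnorm⟩ := exists_subgroup_Env H β
  intro z hz
  rw [← hK] at hz
  have hzC : z ∈ CIter K H β := ZSet_subset_CIter hHK (fun ρ hρ => hnorm ρ hρ.le) hz
  exact (mem_Env_add_one_of_coe_eq hK).mpr
    ⟨ZSet_subset K.one_mem β hz, fun c hc => pcomm_mem_CIter_of_mem_add_one hzC hc⟩

theorem ZSet_Env_mono (H : Set G) {α μ : Ordinal} (hαμ : α ≤ μ) :
    ZSet (Env H α) α ⊆ ZSet (Env H μ) μ := by
  induction μ using WellFoundedLT.induction generalizing α with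
  | _ μ ih =>
  rcases hαμ.lt_or_eq with hαμ | rfl
  · have hsub : ZSet (Env H α) α ⊆ Env H μ := fun x hx => mem_Env_of_forall_lt fun σ hσ => by
      rcases le_or_gt α σ with hασ | hσα
      · exact ZSet_Env_subset_Env_add_one H σ (ih σ hσ hασ hx)
      · exact Env_antitone H (add_one_le_of_lt hσα) (ZSet_subset (one_mem_Env H α) α hx)
    exact (ZSet_subset_ZSet_of_subset (one_mem_Env H μ) (Env_antitone H hαμ.le) hsub).trans
      (ZSet_mono (one_mem_Env H μ) hαμ.le)
  · exact subset_rfl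

end Env

end Envelope

theorem stmt12 {G : Type*} [Group G] (H : Subgroup G) (α lam : Ordinal) (h : α ≤ lam) :
    ZSet (Env (H : Set G) α) α ⊆ ZSet (Env (H : Set G) lam) lam :=
  Envelope.ZSet_Env_mono (H : Set G) h
end
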